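/- Let n ≥ 5 and let (t, e) be a permissible pair of elements of T_n with t an odd permutation and e ≠ id. Then φ_{t,e} is a left identity for the singular part of the endomorphism monoid: for every semigroup endomorphism α of T_n that is not bijective, α(φ_{t,e}(x)) = α(x) for all x ∈ T_n. -/

import Mathlib

/-- `s : Fin n → Fin n` is an odd permutation if it is the underlying function of some
permutation of sign `-1`. -/
def IsOddPerm {n : ℕ} (s : Fin n → Fin n) : Prop :=
  ∃ σ : Equiv.Perm (Fin n), Equiv.Perm.sign σ = -1 ∧ ⇑σ = s

/-- `s : Fin n → Fin n` is an even permutation if it is the underlying function of some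
permutation of sign `1`. -/
def IsEvenPerm {n : ℕ} (s : Fin n → Fin n) : Prop :=
  ∃ σ : Equiv.Perm (Fin n), Equiv.Perm.sign σ = 1 ∧ ⇑σ = s

/-- A pair `(t, e)` of elements of `T_n` is permissible if `t ∘ t ∘ t = t` and
`t ∘ e = e ∘ t = e ∘ e = e`. -/
def Permissible {n : ℕ} (t e : Fin n → Fin n) : Prop :=
  t ∘ t ∘ t = t ∧ t ∘ e = e ∧ e ∘ t = e ∧ e ∘ e = e

open Classical in
/-- For a (permissible) pair `(t, e)`, the map `φ_{t,e} : T_n → T_n` sending `s` to `t` if `s`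
is an odd permutation, to `t ∘ t` if `s` is an even permutation, and to `e` if `s` is not
bijective. -/
noncomputable def phi {n : ℕ} (t e : Fin n → Fin n) : (Fin n → Fin n) → (Fin n → Fin n) :=
  fun s => if IsOddPerm s then t else if IsEvenPerm s then t ∘ t else e

/-- `φ : T_n → T_n` is a semigroup endomorphism of `T_n` if `φ (s ∘ s') = φ s ∘ φ s'`
for all `s, s'`. -/
def IsEndo {n : ℕ} (φ : (Fin n → Fin n) → (Fin n → Fin n)) : Prop :=
  ∀ s s' : Fin n → Fin n, φ (s ∘ s') = φ s ∘ φ s'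

/-!
A non-injective endomorphism `α` of `T_n` identifies two constants, hence all constants; so every
`α σ`, `σ ∈ S_n`, fixes a common point. If `α` were injective on `S_n`, then `S_n` would act
faithfully on the fixed points of the idempotent `α id` other than that point, which is impossible
since `n! > (n - 1)!`. Hence `{σ | α σ = α id}` is a nontrivial normal subgroup of `S_n`, which
contains `A_n` as `n ≥ 5`: on permutations, `α` only depends on the sign.

The idempotents `update id u v` of rank `n - 1` are conjugate under `A_n`, so they share one image
`a`, and `a` absorbs every `α σ` on the left. Every singular map is `y ∘ update id u v` with `y` a
permutation or of larger rank, so by induction every singular map is sent to `a`. Finally `t`,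
`t ∘ t` and `e` are odd, even and singular respectively.
-/

open Equiv Function

namespace MulHom

variable {G M : Type*} [Group G] [Mul M] (ψ : G →ₙ* M)

def fiberOne : Subgroup G where
  carrier := {g | ψ g = ψ 1}
  one_mem' := rfl
  mul_mem' {g h} (hg : ψ g = ψ 1) (hh : ψ h = ψ 1) := by
    change ψ (g * h) = ψ 1
    rw [map_mul, hg, hh, ← map_mul, one_mul]
  inv_mem' {g} (hg : ψ g = ψ 1) := by
    change ψ g⁻¹ = ψ 1
    rw [← one_mul g⁻¹, map_mul, ← hg, ← map_mul, mul_inv_cancel, hg]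

theorem mem_fiberOne {g : G} : g ∈ ψ.fiberOne ↔ ψ g = ψ 1 := Iff.rfl

instance fiberOne_normal : ψ.fiberOne.Normal where
  conj_mem g hg h := by
    rw [mem_fiberOne] at *
    rw [map_mul, map_mul, hg, ← map_mul, ← map_mul, mul_one, mul_inv_cancel]

theorem apply_eq_apply_iff_inv_mul_mem {g h : G} : ψ g = ψ h ↔ g⁻¹ * h ∈ ψ.fiberOne := by
  rw [mem_fiberOne]
  constructor
  · intro hgh
    rw [map_mul, ← hgh, ← map_mul, inv_mul_cancel]
  · intro hgh
    rw [← mul_inv_cancel_left g h, map_mul, hgh, ← map_mul, mul_one]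

theorem card_le_factorial_card_sub_one {G X : Type*} [Group G] [Finite X]
    (ψ : G →ₙ* Function.End X) (hψ : Injective ψ) {x₀ : X} (hx₀ : ∀ g, ψ g x₀ = x₀) :
    Nat.card G ≤ (Nat.card X - 1).factorial := by
  have hmul : ∀ g h w, ψ g (ψ h w) = ψ (g * h) w := fun g h w => by rw [map_mul]; rfl
  have hinj : ∀ g {w w' : X}, ψ 1 w = w → ψ 1 w' = w' → ψ g w = ψ g w' → w = w' :=
    fun g w w' hw hw' h => by rw [← hw, ← hw', ← inv_mul_cancel g, ← hmul, h, hmul]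
  let S := {w : X // ψ 1 w = w ∧ w ≠ x₀}
  -- `ψ g` is determined by its restriction to the fixed points of the idempotent `ψ 1`.
  let restrict (g : G) : S ↪ S :=
    ⟨fun w => ⟨ψ g w, by rw [hmul, one_mul], fun h => w.2.2 <|
        hinj g w.2.1 (hx₀ 1) (h.trans (hx₀ g).symm)⟩,
      fun w w' h => Subtype.ext <| hinj g w.2.1 w'.2.1 (congrArg Subtype.val h)⟩
  have hrestrict : Injective restrict := by
    intro g h hgh
    apply hψ
    funext w
    rw [← mul_one g, ← mul_one h, ← hmul g, ← hmul h]
    by_cases hw : ψ 1 w = x₀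
    · rw [hw, hx₀, hx₀]
    · exact congrArg Subtype.val
        (DFunLike.congr_fun hgh ⟨ψ 1 w, by rw [hmul, mul_one], hw⟩)
  calc Nat.card G ≤ Nat.card (S ↪ S) := Nat.card_le_card_of_injective _ hrestrict
    _ = (Nat.card S).factorial := by
      have := Fintype.ofFinite S
      classical
      rw [Nat.card_eq_fintype_card, Fintype.card_embedding_eq, Nat.descFactorial_self,
        Nat.card_eq_fintype_card]
    _ ≤ (Nat.card X - 1).factorial := by
      apply Nat.factorial_le
      have : Nat.card S < Nat.card X := Finite.card_subtype_lt (x := x₀) (by simp)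
      omega

end MulHom

theorem exists_even_perm_apply_eq {X : Type*} [Fintype X] [DecidableEq X] (hX : 4 ≤ Nat.card X)
    {a b c d : X} (hab : a ≠ b) (hcd : c ≠ d) :
    ∃ ν : Perm X, Perm.sign ν = 1 ∧ ν a = c ∧ ν b = d := by
  have := alternatingGroup.isMultiplyPretransitive X
  have : MulAction.IsMultiplyPretransitive (alternatingGroup X) X 2 :=
    MulAction.isMultiplyPretransitive_of_le (n := Nat.card X - 2) (by omega) (by omega)
  obtain ⟨ν, hνa, hνb⟩ := MulAction.is_two_pretransitive_iff.1 this hab hcd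
  exact ⟨ν, ν.2, hνa, hνb⟩

theorem update_id_comp_update_id {X : Type*} [DecidableEq X] {u v : X} (huv : u ≠ v) :
    update id u v ∘ update id u v = update id u v := by
  funext z
  by_cases hz : z = u <;> simp [hz, huv.symm]

theorem swap_comp_update_id {X : Type*} [DecidableEq X] (u v : X) :
    ⇑(swap u v) ∘ update id u v = update id v u := by
  funext z
  by_cases hu : z = u <;> by_cases hv : z = v <;> simp_all [swap_apply_of_ne_of_ne]

theorem perm_comp_update_id_comp_inv {X : Type*} [DecidableEq X] (ν : Perm X) (u v : X) :
    ⇑ν ∘ update id u v ∘ ⇑ν⁻¹ = update id (ν u) (ν v) := by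
  funext z
  by_cases hz : z = ν u
  · simp [hz]
  · simp [hz, symm_apply_eq]

theorem exists_eq_comp_update_id {X : Type*} [DecidableEq X] {x : X → X}
    (hinj : ¬ Injective x) (hsurj : ¬ Surjective x) :
    ∃ y u v, u ≠ v ∧ x = y ∘ update id u v ∧ Set.range x ⊂ Set.range y := by
  obtain ⟨u, v, hxuv, huv⟩ := not_injective_iff.1 hinj
  obtain ⟨m, hm⟩ := not_forall.1 hsurj
  have hx : x = update x u m ∘ update id u v := by
    funext z
    by_cases hz : z = u <;> simp [hz, huv.symm, hxuv]
  have hsub : Set.range x ⊆ Set.range (update x u m) :=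
    fun _ ⟨z, hz⟩ => ⟨_, (congrFun hx z).symm.trans hz⟩
  exact ⟨update x u m, u, v, huv, hx,
    (Set.ssubset_iff_of_subset hsub).2 ⟨m, ⟨u, update_self _ _ _⟩, hm⟩⟩

theorem not_injective_of_comp_self_eq_of_ne_id {X : Type*} {e : X → X} (he : e ∘ e = e)
    (he' : e ≠ id) : ¬ Injective e :=
  fun hinj => he' <| funext fun z => hinj (congrFun he z)

theorem isOddPerm_or_isEvenPerm_of_bijective {n : ℕ} {s : Fin n → Fin n} (hs : Bijective s) :
    IsOddPerm s ∨ IsEvenPerm s := by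
  rcases Int.units_eq_one_or (Perm.sign (Equiv.ofBijective s hs)) with h | h
  · exact .inr ⟨_, h, rfl⟩
  · exact .inl ⟨_, h, rfl⟩

namespace IsEndo

variable {n : ℕ} {α : (Fin n → Fin n) → (Fin n → Fin n)}

def permMulHom (hα : IsEndo α) : Perm (Fin n) →ₙ* Function.End (Fin n) where
  toFun σ := α σ
  map_mul' σ τ := hα σ τ

theorem apply_id_comp (hα : IsEndo α) (s : Fin n → Fin n) : α id ∘ α s = α s :=
  (hα id s).symm

theorem comp_apply_id (hα : IsEndo α) (s : Fin n → Fin n) : α s ∘ α id = α s :=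
  (hα s id).symm

theorem apply_const_eq (hα : IsEndo α) (hinj : ¬ Injective α) (a b : Fin n) :
    α (const _ a) = α (const _ b) := by
  have hconst : ∀ s w, α (const _ (s w)) = α s ∘ α (const _ w) := fun s w => hα s (const _ w)
  obtain ⟨x, y, hxy, hne⟩ := not_injective_iff.1 hinj
  obtain ⟨z, hz⟩ := Function.ne_iff.1 hne
  classical
  obtain ⟨g, ha, hb⟩ : ∃ g : Fin n → Fin n, g (x z) = a ∧ g (y z) = b :=
    ⟨fun w => if w = x z then a else b, if_pos rfl, if_neg (Ne.symm hz)⟩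
  rw [← ha, ← hb, hconst, hconst, hconst, hconst, hxy]

theorem not_injective_permMulHom (hn : 2 ≤ n) (hα : IsEndo α) (hinj : ¬ Injective α) :
    ¬ Injective hα.permMulHom := by
  intro hψ
  have p : Fin n := ⟨0, by omega⟩
  have hfix : ∀ σ : Perm (Fin n), hα.permMulHom σ (α (const _ p) p) = α (const _ p) p := by
    intro σ
    change (α σ ∘ α (const _ p)) p = _
    rw [← hα]
    exact congrFun (apply_const_eq hα hinj (σ p) p) p
  have hcard := MulHom.card_le_factorial_card_sub_one _ hψ hfix
  rw [Nat.card_perm, Nat.card_eq_fintype_card, Fintype.card_fin] at hcard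
  exact absurd hcard (not_le.2 ((Nat.factorial_lt (by omega)).2 (by omega)))

theorem apply_perm_eq_of_sign_eq (hn : 5 ≤ n) (hα : IsEndo α) (hinj : ¬ Injective α)
    {σ τ : Perm (Fin n)} (h : Perm.sign σ = Perm.sign τ) : α σ = α τ := by
  obtain ⟨σ₀, τ₀, hστ₀, hne⟩ := not_injective_iff.1 (not_injective_permMulHom (by omega) hα hinj)
  have : Nontrivial hα.permMulHom.fiberOne := (Subgroup.nontrivial_iff_exists_ne_one _).2
    ⟨σ₀⁻¹ * τ₀, (MulHom.apply_eq_apply_iff_inv_mul_mem _).1 hστ₀, by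
      rwa [Ne, inv_mul_eq_one]⟩
  have hle := Perm.alternatingGroup_le_of_normal (by simpa using hn) this
  refine (MulHom.apply_eq_apply_iff_inv_mul_mem hα.permMulHom).2 (hle ?_)
  rw [Perm.mem_alternatingGroup, map_mul, map_inv, h, inv_mul_cancel]

theorem apply_perm_eq_apply_id (hn : 5 ≤ n) (hα : IsEndo α) (hinj : ¬ Injective α)
    {σ : Perm (Fin n)} (hσ : Perm.sign σ = 1) : α σ = α id :=
  apply_perm_eq_of_sign_eq (τ := 1) hn hα hinj (hσ.trans Perm.sign_one.symm)

theorem apply_update_id_eq (hn : 5 ≤ n) (hα : IsEndo α) (hinj : ¬ Injective α)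
    {u v u' v' : Fin n} (huv : u ≠ v) (hu'v' : u' ≠ v') :
    α (update id u v) = α (update id u' v') := by
  obtain ⟨ν, hν, rfl, rfl⟩ := exists_even_perm_apply_eq (by simp; omega) huv hu'v'
  rw [← perm_comp_update_id_comp_inv, hα, hα, apply_perm_eq_apply_id hn hα hinj hν,
    apply_perm_eq_apply_id hn hα hinj (by simp [hν]), hα.comp_apply_id, hα.apply_id_comp]

theorem apply_perm_comp_apply_update_id (hn : 5 ≤ n) (hα : IsEndo α) (hinj : ¬ Injective α)
    (σ : Perm (Fin n)) {u v : Fin n} (huv : u ≠ v) :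
    α σ ∘ α (update id u v) = α (update id u v) := by
  rcases Int.units_eq_one_or (Perm.sign σ) with h | h
  · rw [apply_perm_eq_apply_id hn hα hinj h, hα.apply_id_comp]
  · rw [apply_perm_eq_of_sign_eq hn hα hinj (h.trans (Perm.sign_swap huv).symm), ← hα,
      swap_comp_update_id, apply_update_id_eq hn hα hinj huv.symm huv]

theorem apply_eq_apply_update_id (hn : 5 ≤ n) (hα : IsEndo α) (hinj : ¬ Injective α)
    {x : Fin n → Fin n} (hx : ¬ Bijective x) {u v : Fin n} (huv : u ≠ v) :
    α x = α (update id u v) := by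
  obtain ⟨y, u', v', hu'v', hxy, hrange⟩ := exists_eq_comp_update_id
    (mt Finite.injective_iff_bijective.1 hx) (mt Finite.surjective_iff_bijective.1 hx)
  rw [hxy, hα, apply_update_id_eq hn hα hinj hu'v' huv]
  by_cases hy : Bijective y
  · exact apply_perm_comp_apply_update_id hn hα hinj (Equiv.ofBijective y hy) huv
  · rw [apply_eq_apply_update_id hn hα hinj hy huv, ← hα, update_id_comp_update_id huv]
termination_by (Set.range x)ᶜ.ncard
decreasing_by exact Set.ncard_lt_ncard (compl_lt_compl_iff_lt.2 hrange)

theorem apply_eq_apply_of_not_bijective (hn : 5 ≤ n) (hα : IsEndo α) (hinj : ¬ Injective α)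
    {x y : Fin n → Fin n} (hx : ¬ Bijective x) (hy : ¬ Bijective y) : α x = α y := by
  obtain ⟨u, v, -, huv⟩ := not_injective_iff.1 (mt Finite.injective_iff_bijective.1 hy)
  rw [apply_eq_apply_update_id hn hα hinj hx huv, apply_eq_apply_update_id hn hα hinj hy huv]

end IsEndo

/-- For `n ≥ 5` and a permissible pair `(t, e)` with `t` an odd permutation and
`e ≠ id`, the map `φ_{t,e}` is a left identity for the singular part of the endomorphism
monoid. -/
theorem odd_type_left_identity (n : ℕ) (hn : 5 ≤ n) (t e : Fin n → Fin n)
    (h : Permissible t e) (ht : IsOddPerm t) (he : e ≠ id)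
    (α : (Fin n → Fin n) → (Fin n → Fin n)) (hα : IsEndo α)
    (hbij : ¬ Function.Bijective α) :
    ∀ x : Fin n → Fin n, α (phi t e x) = α x := by
  have hinj : ¬ Injective α := mt Finite.injective_iff_bijective.1 hbij
  obtain ⟨σ, hσ, rfl⟩ := ht
  intro x
  unfold phi
  split_ifs with hodd heven
  · obtain ⟨τ, hτ, rfl⟩ := hodd
    exact hα.apply_perm_eq_of_sign_eq hn hinj (hσ.trans hτ.symm)
  · obtain ⟨τ, hτ, rfl⟩ := heven
    exact hα.apply_perm_eq_of_sign_eq (σ := σ * σ) hn hinj (by simp [hσ, hτ])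
  · have hx : ¬ Bijective x := fun hb => (isOddPerm_or_isEvenPerm_of_bijective hb).elim hodd heven
    have he' : ¬ Bijective e := fun hb => not_injective_of_comp_self_eq_of_ne_id h.2.2.2 he hb.1
    exact hα.apply_eq_apply_of_not_bijective hn hinj he' hx
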